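/- For every Veltman frame F and every n ≥ 0: F satisfies the frame condition F^n if and only if F validates the principle R^n under all valuations, where R^0 := A▷B → ¬(A▷¬C) ▷ (B∧□C) and R^{n+1} := A▷B → (U_{n+1} ∧ (D_{n+1}▷A)) ▷ (B∧□C), with the schematic letters instantiated by propositional variables. -/
import Mathlib


/-- Formulas of interpretability logic: propositional variables, ⊥, →, □, ▷. -/
inductive ILForm : Type
  | var : ℕ → ILForm
  | bot : ILForm
  | impl : ILForm → ILForm → ILForm
  | box : ILForm → ILForm
  | rhd : ILForm → ILForm → ILForm
  deriving DecidableEq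

namespace ILForm

def neg (A : ILForm) : ILForm := impl A bot
def top : ILForm := neg bot
def conj (A B : ILForm) : ILForm := neg (impl A (neg B))
def disj (A B : ILForm) : ILForm := impl (neg A) B
def dia (A : ILForm) : ILForm := neg (box (neg A))

end ILForm

infixr:30 " ⟹ " => ILForm.impl
infixl:65 " ⋀ " => ILForm.conj
infixl:64 " ⋁ " => ILForm.disj
infix:50 " ▷ " => ILForm.rhd
prefix:70 "□" => ILForm.box
prefix:70 "◇" => ILForm.dia
prefix:70 "∼" => ILForm.neg

/-- Propositional evaluation of a formula, treating boxed and ▷-formulas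
(and variables) as atoms evaluated by `g`.  A formula is an instance of a
propositional tautology iff it evaluates to `true` under every such `g`. -/
def ILForm.evalProp (g : ILForm → Bool) : ILForm → Bool
  | .bot => false
  | .impl a b => !(ILForm.evalProp g a) || ILForm.evalProp g b
  | f => g f

/-- Hilbert-style provability in the interpretability logic IL extended with
an additional set `Ax` of axioms. -/
inductive ILProv (Ax : Set ILForm) : ILForm → Prop
  | ax {A : ILForm} : A ∈ Ax → ILProv Ax A
  | taut {A : ILForm} : (∀ g : ILForm → Bool, A.evalProp g = true) → ILProv Ax A
  | L1 (A B : ILForm) : ILProv Ax ((□(A ⟹ B)) ⟹ ((□A) ⟹ (□B)))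
  | L2 (A : ILForm) : ILProv Ax ((□A) ⟹ (□□A))
  | L3 (A : ILForm) : ILProv Ax ((□((□A) ⟹ A)) ⟹ (□A))
  | J1 (A B : ILForm) : ILProv Ax ((□(A ⟹ B)) ⟹ (A ▷ B))
  | J2 (A B C : ILForm) : ILProv Ax (((A ▷ B) ⋀ (B ▷ C)) ⟹ (A ▷ C))
  | J3 (A B C : ILForm) : ILProv Ax (((A ▷ C) ⋀ (B ▷ C)) ⟹ ((A ⋁ B) ▷ C))
  | J4 (A B : ILForm) : ILProv Ax ((A ▷ B) ⟹ ((◇A) ⟹ (◇B)))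
  | J5 (A : ILForm) : ILProv Ax ((◇A) ▷ A)
  | mp {A B : ILForm} : ILProv Ax (A ⟹ B) → ILProv Ax A → ILProv Ax B
  | nec {A : ILForm} : ILProv Ax A → ILProv Ax (□A)

/-- Substitution of formulas for propositional variables. -/
def ILForm.substVar (σ : ℕ → ILForm) : ILForm → ILForm
  | .var n => σ n
  | .bot => .bot
  | .impl a b => .impl (ILForm.substVar σ a) (ILForm.substVar σ b)
  | .box a => .box (ILForm.substVar σ a)
  | .rhd a b => .rhd (ILForm.substVar σ a) (ILForm.substVar σ b)

/-- All substitution instances of a modal scheme. -/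
def instancesOf (A : ILForm) : Set ILForm := {B | ∃ σ : ℕ → ILForm, B = ILForm.substVar σ A}

/-- Helper for simultaneous replacement of subformula occurrences. -/
def ILForm.hit (ps : List (ILForm × ILForm)) (f : ILForm) : Option ILForm :=
  (ps.find? fun pq => decide (pq.1 = f)).map (·.2)

/-- Simultaneous replacement of (outermost) occurrences of the patterns
`p` by the corresponding `q`, for `(p,q)` in the list `ps`. -/
def ILForm.replL (ps : List (ILForm × ILForm)) : ILForm → ILForm
  | .var n => (ILForm.hit ps (.var n)).getD (.var n)
  | .bot => (ILForm.hit ps .bot).getD .bot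
  | .impl a b =>
      (ILForm.hit ps (.impl a b)).getD (.impl (ILForm.replL ps a) (ILForm.replL ps b))
  | .box a => (ILForm.hit ps (.box a)).getD (.box (ILForm.replL ps a))
  | .rhd a b =>
      (ILForm.hit ps (.rhd a b)).getD (.rhd (ILForm.replL ps a) (ILForm.replL ps b))

/-- The placeholder variables `A_n`, `B_n`, `C_n`, `E_n`. -/
def Av (n : ℕ) : ILForm := .var (4*n)
def Bv (n : ℕ) : ILForm := .var (4*n+1)
def Cv (n : ℕ) : ILForm := .var (4*n+2)
def Ev (n : ℕ) : ILForm := .var (4*n+3)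

/-- The slim series `R_n`, defined by the substitutions of the paper:
`R_0 := A_0▷B_0 → ¬(A_0▷¬C_0) ▷ B_0∧□C_0`;
`R_{2n+1} := R_{2n}[¬(A_n▷¬C_n)/¬(A_n▷¬C_n)∧(E_{n+1}▷◇A_{n+1});
                    B_n∧□C_n/B_n∧□C_n∧(E_{n+1}▷A_{n+1})]`;
`R_{2n+2} := R_{2n+1}[B_n/B_n∧(A_{n+1}▷B_{n+1}); ◇A_{n+1}/¬(A_{n+1}▷¬C_{n+1});
     (E_{n+1}▷A_{n+1})/(E_{n+1}▷A_{n+1})∧(E_{n+1}▷B_{n+1}∧□C_{n+1})]`. -/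
def Rser : ℕ → ILForm
  | 0 => (Av 0 ▷ Bv 0) ⟹ ((∼(Av 0 ▷ (∼(Cv 0)))) ▷ ((Bv 0) ⋀ (□(Cv 0))))
  | n+1 =>
    let k := n / 2
    if n % 2 = 0 then
      ILForm.replL
        [ (∼(Av k ▷ (∼(Cv k))), (∼(Av k ▷ (∼(Cv k)))) ⋀ (Ev (k+1) ▷ (◇(Av (k+1))))),
          ((Bv k) ⋀ (□(Cv k)), ((Bv k) ⋀ (□(Cv k))) ⋀ (Ev (k+1) ▷ Av (k+1))) ]
        (Rser n)
    else
      ILForm.replL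
        [ (Bv k, (Bv k) ⋀ (Av (k+1) ▷ Bv (k+1))),
          (◇(Av (k+1)), ∼(Av (k+1) ▷ (∼(Cv (k+1))))),
          (Ev (k+1) ▷ Av (k+1),
            (Ev (k+1) ▷ Av (k+1)) ⋀ (Ev (k+1) ▷ ((Bv (k+1)) ⋀ (□(Cv (k+1)))))) ]
        (Rser n)

/-- The formulas `X_n` of the well-behaved subhierarchy. -/
def Xt (A B : ℕ → ILForm) : ℕ → ILForm
  | 0 => A 0 ▷ B 0
  | n+1 => A (n+1) ▷ ((B (n+1)) ⋀ (Xt A B n))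

/-- The formulas `Y_n` of the well-behaved subhierarchy. -/
def Yt (A C E : ℕ → ILForm) : ℕ → ILForm
  | 0 => ∼(A 0 ▷ (∼(C 0)))
  | n+1 => (∼(A (n+1) ▷ (∼(C (n+1))))) ⋀ (E (n+1) ▷ (Yt A C E n))

/-- The formulas `Z_n` of the well-behaved subhierarchy. -/
def Zt (A B C E : ℕ → ILForm) : ℕ → ILForm
  | 0 => (B 0) ⋀ (□(C 0))
  | n+1 => (((B (n+1)) ⋀ (Xt A B n)) ⋀ (□(C (n+1)))) ⋀
             ((E (n+1) ▷ A n) ⋀ (E (n+1) ▷ (Zt A B C E n)))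

/-- The principles `R̃_n = X_n → Y_n ▷ Z_n`. -/
def Rtilde (A B C E : ℕ → ILForm) (n : ℕ) : ILForm :=
  (Xt A B n) ⟹ ((Yt A C E n) ▷ (Zt A B C E n))

/-- `X_{k-1}`, with the convention `X_{-1} = ⊤`. -/
def Xminus (A B : ℕ → ILForm) : ℕ → ILForm
  | 0 => ILForm.top
  | n+1 => Xt A B n

/-- `A_{k-1}`, with the convention `A_{-1} = ⊤`. -/
def Aminus (A : ℕ → ILForm) : ℕ → ILForm
  | 0 => ILForm.top
  | n+1 => A n

/-- `Z_{k-1}`, with the convention `Z_{-1} = ⊤`. -/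
def Zminus (A B C E : ℕ → ILForm) : ℕ → ILForm
  | 0 => ILForm.top
  | n+1 => Zt A B C E n

/-- Veltman frames. -/
structure Veltman where
  W : Type
  ne : Nonempty W
  R : W → W → Prop
  S : W → W → W → Prop
  R_trans : ∀ {x y z}, R x y → R y z → R x z
  R_cwf : WellFounded (fun x y => R y x)
  S_dom : ∀ {x y z}, S x y z → R x y ∧ R x z
  S_refl : ∀ {x y}, R x y → S x y y
  S_trans : ∀ {x y z u}, S x y z → S x z u → S x y u
  R_sub_S : ∀ {x y z}, R x y → R y z → S x y z

/-- Forcing in a Veltman model. -/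
def force (F : Veltman) (V : ℕ → F.W → Prop) : ILForm → F.W → Prop
  | .var n => fun w => V n w
  | .bot => fun _ => False
  | .impl a b => fun w => force F V a w → force F V b w
  | .box a => fun w => ∀ v, F.R w v → force F V a v
  | .rhd a b => fun w => ∀ v, F.R w v → force F V a v →
      ∃ u, F.S w v u ∧ force F V b u

/-- A formula is valid on a frame if it is forced at every world under every valuation. -/
def valid (F : Veltman) (A : ILForm) : Prop := ∀ (V : ℕ → F.W → Prop) (w : F.W), force F V A w

/-- The `C`-assuring successor relation `x R^C_⊩ y`. -/
def RC (F : Veltman) (V : ℕ → F.W → Prop) (C : ILForm) (x y : F.W) : Prop :=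
  F.R x y ∧ force F V C y ∧ ∀ z, F.S x y z → force F V C z

/-- The ternary relations `G_n` on a Veltman frame. -/
def G (F : Veltman) : ℕ → F.W → F.W → F.W → Prop
  | 0 => fun x y z => ∀ u, F.R z u → F.S x y u
  | n+1 => fun x y z => ∀ u, F.R z u → F.S x y u ∧ ∀ v, F.S x u v → G F n z u v

/-- The frame conditions `F_n` of the slim hierarchy. -/
def Fcond (F : Veltman) (n : ℕ) : Prop :=
  ∀ w x y z, F.R w x → F.R x y → F.S w y z → G F n x y z

/-- The quaternary relations `B_n` on a Veltman frame. -/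
def Bq (F : Veltman) : ℕ → F.W → F.W → F.W → F.W → Prop
  | 0 => fun x1 x0 y0 y1 => F.R x1 x0 ∧ F.R x0 y0 ∧ F.S x1 y0 y1
  | n+1 => fun x' x0 y0 y' => ∃ xn yn, F.R x' xn ∧ Bq F n xn x0 y0 yn ∧ F.S x' yn y'

/-- The formulas `U_n` of the broad series (with `U_0 := ⊤`, unused). -/
def Ubr (C : ILForm) (D : ℕ → ILForm) : ℕ → ILForm
  | 0 => ILForm.top
  | 1 => ◇(∼(D 1 ▷ (∼C)))
  | n+2 => ◇(((D (n+1)) ▷ (D (n+2))) ⋀ (Ubr C D (n+1)))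

/-- The frame conditions `F^n` of the broad series. -/
def FbroadCond (F : Veltman) (n : ℕ) : Prop :=
  ∀ x1 x0 y0 y1, Bq F n x1 x0 y0 y1 → ∀ u, F.R y1 u → F.S x0 y0 u

/-- The principles `R^n` of the broad series. -/
def Rbroad (A B C : ILForm) (D : ℕ → ILForm) : ℕ → ILForm
  | 0 => (A ▷ B) ⟹ ((∼(A ▷ (∼C))) ▷ (B ⋀ (□C)))
  | n+1 => (A ▷ B) ⟹ (((Ubr C D (n+1)) ⋀ (D (n+1) ▷ A)) ▷ (B ⋀ (□C)))

section Stmt15Aux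

variable {F : Veltman}

lemma force_neg' {V : ℕ → F.W → Prop} {a : ILForm} {w : F.W} :
    force F V (∼a) w ↔ ¬ force F V a w := Iff.rfl

lemma force_rhd' {V : ℕ → F.W → Prop} {a b : ILForm} {w : F.W} :
    force F V (a ▷ b) w ↔
      ∀ v, F.R w v → force F V a v → ∃ u, F.S w v u ∧ force F V b u := Iff.rfl

lemma force_var' {V : ℕ → F.W → Prop} {k : ℕ} {w : F.W} :
    force F V (.var k) w ↔ V k w := Iff.rfl

lemma force_conj' {V : ℕ → F.W → Prop} {a b : ILForm} {w : F.W} :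
    force F V (a ⋀ b) w ↔ force F V a w ∧ force F V b w := by
  show ((force F V a w → (force F V b w → False)) → False) ↔ _
  tauto

lemma force_dia' {V : ℕ → F.W → Prop} {a : ILForm} {w : F.W} :
    force F V (◇a) w ↔ ∃ v, F.R w v ∧ force F V a v := by
  constructor
  · intro h
    by_contra hc
    push_neg at hc
    exact h fun v hv ha => hc v hv ha
  · rintro ⟨v, hv, ha⟩ h
    exact h v hv ha

/-- Extraction of the full chain data from `Bq`. -/
lemma Bq_chain (F : Veltman) (x0 y0 : F.W) :
    ∀ (n : ℕ) (x' y' : F.W), Bq F n x' x0 y0 y' →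
    ∃ xs ys : ℕ → F.W, xs 0 = x0 ∧ ys 0 = y0 ∧ xs (n+1) = x' ∧ ys (n+1) = y' ∧
      (∀ k, k ≤ n → F.R (xs (k+1)) (xs k)) ∧ F.R (xs 0) (ys 0) ∧
      (∀ k, k ≤ n → F.S (xs (k+1)) (ys k) (ys (k+1))) := by
  intro n
  induction n with
  | zero =>
    intro x' y' h
    obtain ⟨h1, h2, h3⟩ := h
    refine ⟨fun k => if k = 0 then x0 else x', fun k => if k = 0 then y0 else y',
      by simp, by simp, by simp, by simp, ?_, by simpa using h2, ?_⟩
    · intro k hk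
      interval_cases k
      simpa using h1
    · intro k hk
      interval_cases k
      simpa using h3
  | succ n ih =>
    intro x' y' h
    obtain ⟨xn, yn, hRx, hB, hSx⟩ := h
    obtain ⟨xs, ys, hxs0, hys0, hxsT, hysT, hRs, hR0, hSs⟩ := ih xn yn hB
    refine ⟨fun k => if k = n+2 then x' else xs k, fun k => if k = n+2 then y' else ys k,
      ?_, ?_, ?_, ?_, ?_, ?_, ?_⟩
    · beta_reduce; rw [if_neg (by omega)]; exact hxs0
    · beta_reduce; rw [if_neg (by omega)]; exact hys0
    · beta_reduce; rw [if_pos (by omega)]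
    · beta_reduce; rw [if_pos (by omega)]
    · intro k hk
      beta_reduce
      by_cases hke : k = n+1
      · subst hke
        rw [if_pos (by omega), if_neg (by omega), hxsT]
        exact hRx
      · rw [if_neg (by omega), if_neg (by omega)]
        exact hRs k (by omega)
    · beta_reduce; rw [if_neg (by omega), if_neg (by omega)]; exact hR0
    · intro k hk
      beta_reduce
      by_cases hke : k = n+1
      · subst hke
        rw [if_pos (by omega), if_neg (by omega), if_pos (by omega), hysT]
        exact hSx
      · rw [if_neg (by omega), if_neg (by omega), if_neg (by omega)]
        exact hSs k (by omega)

/-- Extraction of chain data from the formulas `U_{n+1}`. -/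
lemma Uchain (F : Veltman) (V : ℕ → F.W → Prop) :
    ∀ (n : ℕ) (v : F.W),
      force F V (Ubr (.var 2) (fun i => .var (2+i)) (n+1)) v →
      ∃ f0 g1 g, F.R v g ∧ V (2+(n+1)) g ∧ (∀ z, F.S f0 g1 z → V 2 z) ∧
        (∀ h, F.S v g h → Bq F n v f0 g1 h) := by
  intro n
  induction n with
  | zero =>
    intro v hyp
    have h1 : force F V (◇(∼((ILForm.var (2+1)) ▷ (∼(ILForm.var 2))))) v := hyp
    rw [force_dia'] at h1
    obtain ⟨f0, hRf0, hneg⟩ := h1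
    simp only [force_neg', force_rhd', force_var'] at hneg
    push_neg at hneg
    obtain ⟨g1, hRg1, hg1D, hg1C⟩ := hneg
    exact ⟨f0, g1, g1, F.R_trans hRf0 hRg1, hg1D, hg1C,
      fun h hSh => ⟨hRf0, hRg1, hSh⟩⟩
  | succ n ih =>
    intro v hyp
    have h1 : force F V (◇(((ILForm.var (2+(n+1))) ▷ (ILForm.var (2+(n+2)))) ⋀
        Ubr (.var 2) (fun i => .var (2+i)) (n+1))) v := hyp
    rw [force_dia'] at h1
    obtain ⟨f, hRf, hf⟩ := h1
    rw [force_conj'] at hf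
    obtain ⟨hf1, hf2⟩ := hf
    obtain ⟨f0, g1, g, hRg, hgD, hC, hBq⟩ := ih f hf2
    obtain ⟨g', hSg', hg'D⟩ := hf1 g hRg hgD
    refine ⟨f0, g1, g', F.R_trans hRf (F.S_dom hSg').2, hg'D, hC, ?_⟩
    intro h hSh
    exact ⟨f, g', hRf, hBq g' hSg', hSh⟩

lemma sound0 (F : Veltman) (h : FbroadCond F 0) :
    valid F (Rbroad (ILForm.var 0) (ILForm.var 1) (ILForm.var 2)
      (fun i => ILForm.var (2+i)) 0) := by
  intro V w hAB v hRv hv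
  simp only [force_neg', force_rhd', force_var'] at hv
  push_neg at hv
  obtain ⟨y, hRy, hyA, hyC⟩ := hv
  obtain ⟨u, hSu, huB⟩ := hAB y (F.R_trans hRv hRy) hyA
  have hCass := h w v y u ⟨hRv, hRy, hSu⟩
  refine ⟨u, F.S_trans (F.R_sub_S hRv hRy) hSu, force_conj'.mpr ⟨huB, ?_⟩⟩
  intro t hRt
  exact hyC t (hCass t hRt)

lemma soundS (F : Veltman) (n : ℕ) (h : FbroadCond F (n+1)) :
    valid F (Rbroad (ILForm.var 0) (ILForm.var 1) (ILForm.var 2)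
      (fun i => ILForm.var (2+i)) (n+1)) := by
  intro V w hAB v hRv hv
  rw [force_conj'] at hv
  obtain ⟨hU, hDA⟩ := hv
  obtain ⟨f0, g1, g, hRg, hgD, hC, hBq⟩ := Uchain F V n v hU
  obtain ⟨hh, hSh, hhA⟩ := hDA g hRg hgD
  have hRvh : F.R v hh := (F.S_dom hSh).2
  obtain ⟨u, hSu, huB⟩ := hAB hh (F.R_trans hRv hRvh) hhA
  have hBqfull : Bq F (n+1) w f0 g1 u := ⟨v, hh, hRv, hBq hh hSh, hSu⟩
  have hCass := h w f0 g1 u hBqfull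
  refine ⟨u, F.S_trans (F.R_sub_S hRv hRvh) hSu, force_conj'.mpr ⟨huB, ?_⟩⟩
  intro t hRt
  exact hC t (hCass t hRt)

/-- The valuation used in the completeness proof, case `n = 0`. -/
def V0 (F : Veltman) (x0 y0 y1 : F.W) : ℕ → F.W → Prop
  | 0 => fun w => w = y0
  | 1 => fun w => w = y1
  | 2 => fun w => F.S x0 y0 w
  | _+3 => fun _ => False

lemma complete0 (F : Veltman)
    (h : valid F (Rbroad (ILForm.var 0) (ILForm.var 1) (ILForm.var 2)
      (fun i => ILForm.var (2+i)) 0)) : FbroadCond F 0 := by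
  intro x1 x0 y0 y1 hBq u hRu
  obtain ⟨h1, h2, h3⟩ := hBq
  have hv := h (V0 F x0 y0 y1) x1
  have hAB : force F (V0 F x0 y0 y1) ((ILForm.var 0) ▷ (ILForm.var 1)) x1 := by
    intro d hRd hd
    have hd' : d = y0 := hd
    rw [hd']
    exact ⟨y1, h3, rfl⟩
  have hneg : force F (V0 F x0 y0 y1) (∼((ILForm.var 0) ▷ (∼(ILForm.var 2)))) x0 := by
    intro H
    obtain ⟨z, hz, hznC⟩ := H y0 h2 rfl
    exact hznC hz
  obtain ⟨u', hSu', hu'⟩ := hv hAB x0 h1 hneg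
  rw [force_conj'] at hu'
  have hu1 : u' = y1 := hu'.1
  have hu2 := hu'.2
  rw [hu1] at hu2
  exact hu2 u hRu

/-- The valuation used in the completeness proof, case `n + 1`. -/
def Vc (F : Veltman) (xs ys : ℕ → F.W) (n : ℕ) (k : ℕ) (w : F.W) : Prop :=
  if k = 0 then w = ys (n+1)
  else if k = 1 then w = ys (n+2)
  else if k = 2 then F.S (xs 0) (ys 0) w
  else w = ys (k-3)

lemma Vc_A {xs ys : ℕ → F.W} {n : ℕ} {w : F.W} : Vc F xs ys n 0 w ↔ w = ys (n+1) := by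
  simp [Vc]

lemma Vc_B {xs ys : ℕ → F.W} {n : ℕ} {w : F.W} : Vc F xs ys n 1 w ↔ w = ys (n+2) := by
  simp [Vc]

lemma Vc_C {xs ys : ℕ → F.W} {n : ℕ} {w : F.W} :
    Vc F xs ys n 2 w ↔ F.S (xs 0) (ys 0) w := by
  simp [Vc]

lemma Vc_D {xs ys : ℕ → F.W} {n : ℕ} (j : ℕ) {w : F.W} :
    Vc F xs ys n (2+(j+1)) w ↔ w = ys j := by
  unfold Vc
  rw [if_neg (by omega), if_neg (by omega), if_neg (by omega),
    show 2+(j+1)-3 = j from by omega]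

lemma forceUbr (F : Veltman) (xs ys : ℕ → F.W) (n : ℕ)
    (hR : ∀ k, k ≤ n+1 → F.R (xs (k+1)) (xs k)) (hR0 : F.R (xs 0) (ys 0))
    (hS : ∀ k, k ≤ n+1 → F.S (xs (k+1)) (ys k) (ys (k+1))) :
    ∀ j, j ≤ n →
      force F (Vc F xs ys n) (Ubr (.var 2) (fun i => .var (2+i)) (j+1)) (xs (j+1)) := by
  intro j
  induction j with
  | zero =>
    intro _
    refine force_dia'.mpr ⟨xs 0, hR 0 (by omega), ?_⟩
    intro H
    obtain ⟨z, hz, hznC⟩ := H (ys 0) hR0 ((Vc_D 0).mpr rfl)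
    exact hznC (Vc_C.mpr hz)
  | succ j ih =>
    intro hj
    refine force_dia'.mpr ⟨xs (j+1), hR (j+1) (by omega), force_conj'.mpr ⟨?_, ih (by omega)⟩⟩
    intro d hRd hd
    have hd' : d = ys j := (Vc_D j).mp hd
    rw [hd']
    exact ⟨ys (j+1), hS j (by omega), (Vc_D (j+1)).mpr rfl⟩

lemma completeS (F : Veltman) (n : ℕ)
    (h : valid F (Rbroad (ILForm.var 0) (ILForm.var 1) (ILForm.var 2)
      (fun i => ILForm.var (2+i)) (n+1))) : FbroadCond F (n+1) := by
  intro X x0 y0 Y hBq u hRu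
  obtain ⟨xs, ys, hxs0, hys0, hxsT, hysT, hRs, hR0, hSs⟩ := Bq_chain F x0 y0 (n+1) X Y hBq
  set V := Vc F xs ys n with hV
  have hv := h V (xs (n+2))
  have hAB : force F V ((ILForm.var 0) ▷ (ILForm.var 1)) (xs (n+2)) := by
    intro d hRd hd
    have hd' : d = ys (n+1) := Vc_A.mp hd
    rw [hd']
    exact ⟨ys (n+2), hSs (n+1) le_rfl, Vc_B.mpr rfl⟩
  have hUD : force F V ((Ubr (.var 2) (fun i => .var (2+i)) (n+1)) ⋀
      ((ILForm.var (2+(n+1))) ▷ (ILForm.var 0))) (xs (n+1)) := by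
    refine force_conj'.mpr ⟨forceUbr F xs ys n hRs hR0 hSs n le_rfl, ?_⟩
    intro d hRd hd
    have hd' : d = ys n := (Vc_D n).mp hd
    rw [hd']
    exact ⟨ys (n+1), hSs n (by omega), Vc_A.mpr rfl⟩
  obtain ⟨u', hSu', hu'⟩ := hv hAB (xs (n+1)) (hRs (n+1) le_rfl) hUD
  rw [force_conj'] at hu'
  have hu1 : u' = ys (n+2) := Vc_B.mp hu'.1
  have hu2 := hu'.2
  rw [hu1, hysT] at hu2
  have := Vc_C.mp (hu2 u hRu)
  rwa [hxs0, hys0] at this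

end Stmt15Aux

/-- a Veltman frame satisfies `F^n` iff it validates the principle
`R^n` under all valuations, with the schematic letters instantiated by the
distinct propositional variables `A := var 0`, `B := var 1`, `C := var 2`,
`D_i := var (2+i)`. -/
theorem stmt15 (F : Veltman) (n : ℕ) :
    FbroadCond F n ↔
      valid F (Rbroad (ILForm.var 0) (ILForm.var 1) (ILForm.var 2)
        (fun i => ILForm.var (2+i)) n) := by
  constructor
  · intro h
    cases n with
    | zero => exact sound0 F h
    | succ n => exact soundS F n h
  · intro h
    cases n with
    | zero => exact complete0 F h
    | succ n => exact completeS F n h
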